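/- (Lemma 1.7) Let U ⊆ ℂ be open and let μ, a, b : U → ℂ be real-differentiable with μ(w) ≠ 0 for all w ∈ U. Then the ℂ⁴-valued map w ↦ μ(w)·W(a(w), b(w)) satisfies ∂_{w̄}(μ·W(a,b)) = 0 at every point of U (i.e., the surface f with f_w = μW(a,b) is minimal, f_{ww̄} = 0) if and only if μ, a and b are all holomorphic on U. -/

import Mathlib

open Complex ComplexConjugate

/-- The Weierstrass vector `W(a,b) = (a+b, 1+ab, i(1-ab), a-b) ∈ ℂ⁴`. -/
noncomputable def W (a b : ℂ) : Fin 4 → ℂ := ![a + b, 1 + a * b, I * (1 - a * b), a - b]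

/-- The Wirtinger derivative `g_{w̄} = (1/2)(g_u + i g_v)` of a map `g : ℂ → E`. -/
noncomputable def wdbar {E : Type*} [NormedAddCommGroup E] [NormedSpace ℂ E]
    (g : ℂ → E) (w : ℂ) : E :=
  (2⁻¹ : ℂ) • (fderiv ℝ g w 1 + Complex.I • fderiv ℝ g w Complex.I)

/-! By the Cauchy–Riemann equations a real-differentiable map is holomorphic exactly where its
`∂_{w̄}` vanishes. The coordinates `G₀, …, G₃` of `G = μ·W(a,b)` determine `μ = (G₁ - iG₂)/2`,
`μa = (G₀ + G₃)/2` and `μb = (G₀ - G₃)/2` linearly, so `G` is holomorphic iff `μ`, `μa`, `μb`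
are, and `μ ≠ 0` lets one divide to recover `a` and `b`. -/

section Wirtinger

variable {E : Type*} [NormedAddCommGroup E] [NormedSpace ℂ E] {g : ℂ → E} {w : ℂ}

theorem wdbar_eq_zero_iff : wdbar g w = 0 ↔ fderiv ℝ g w I = I • fderiv ℝ g w 1 := by
  have key : I • (fderiv ℝ g w 1 + I • fderiv ℝ g w I) = I • fderiv ℝ g w 1 - fderiv ℝ g w I := by
    rw [smul_add, smul_smul, I_mul_I, neg_one_smul, sub_eq_add_neg]
  rw [wdbar, smul_eq_zero, or_iff_right (by norm_num), ← smul_eq_zero_iff_right I_ne_zero, key,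
    sub_eq_zero, eq_comm]

theorem differentiableAt_complex_iff_wdbar_eq_zero (hg : DifferentiableAt ℝ g w) :
    DifferentiableAt ℂ g w ↔ wdbar g w = 0 := by
  rw [differentiableAt_complex_iff_differentiableAt_real, wdbar_eq_zero_iff, and_iff_right hg]

end Wirtinger

theorem DifferentiableAt.of_mul_left {𝕜 𝕜' F : Type*} [NontriviallyNormedField 𝕜]
    [NormedDivisionRing 𝕜'] [NormedAlgebra 𝕜 𝕜'] [NormedAddCommGroup F] [NormedSpace 𝕜 F]
    {μ f : F → 𝕜'} {x : F} (h : DifferentiableAt 𝕜 (fun z => μ z * f z) x)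
    (hμ : DifferentiableAt 𝕜 μ x) (hμx : μ x ≠ 0) : DifferentiableAt 𝕜 f x :=
  ((hμ.fun_inv hμx).fun_mul h).congr_of_eventuallyEq <| by
    filter_upwards [hμ.continuousAt.eventually_ne hμx] with z hz
    exact (inv_mul_cancel_left₀ hz _).symm

theorem W_one_sub_I_mul_W_two (a b : ℂ) : W a b 1 - I * W a b 2 = 2 := by
  simp only [W, Matrix.cons_val]
  linear_combination -(1 - a * b) * I_sq

theorem W_zero_add_W_three (a b : ℂ) : W a b 0 + W a b 3 = 2 * a := by
  simp only [W, Matrix.cons_val]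
  ring

theorem W_zero_sub_W_three (a b : ℂ) : W a b 0 - W a b 3 = 2 * b := by
  simp only [W, Matrix.cons_val]
  ring

section Weierstrass

variable {𝕜 F : Type*} [NontriviallyNormedField 𝕜] [NormedAlgebra 𝕜 ℂ] [NormedAddCommGroup F]
  [NormedSpace 𝕜 F] {μ a b : F → ℂ} {x : F}

theorem DifferentiableAt.W (ha : DifferentiableAt 𝕜 a x) (hb : DifferentiableAt 𝕜 b x) :
    DifferentiableAt 𝕜 (fun z => W (a z) (b z)) x := by
  refine differentiableAt_pi.2 fun i => ?_
  fin_cases i <;> simp [_root_.W] <;> fun_prop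

theorem differentiableAt_smul_W_iff (hμ : μ x ≠ 0) :
    DifferentiableAt 𝕜 (fun z => μ z • W (a z) (b z)) x ↔
      DifferentiableAt 𝕜 μ x ∧ DifferentiableAt 𝕜 a x ∧ DifferentiableAt 𝕜 b x := by
  refine ⟨fun h => ?_, fun ⟨hμ', ha, hb⟩ => hμ'.smul (ha.W hb)⟩
  have hG (i : Fin 4) : DifferentiableAt 𝕜 (fun z => μ z * W (a z) (b z) i) x :=
    differentiableAt_pi.1 h i
  have hμ' : DifferentiableAt 𝕜 μ x := by
    have e : μ = fun z => 2⁻¹ * (μ z * W (a z) (b z) 1 - I * (μ z * W (a z) (b z) 2)) :=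
      funext fun z => by linear_combination -(2⁻¹ * μ z) * W_one_sub_I_mul_W_two (a z) (b z)
    rw [e]
    exact ((hG 1).fun_sub ((hG 2).const_mul I)).const_mul 2⁻¹
  have hμa : DifferentiableAt 𝕜 (fun z => μ z * a z) x := by
    have e : (fun z => μ z * a z) =
        fun z => 2⁻¹ * (μ z * W (a z) (b z) 0 + μ z * W (a z) (b z) 3) :=
      funext fun z => by linear_combination -(2⁻¹ * μ z) * W_zero_add_W_three (a z) (b z)
    rw [e]
    exact ((hG 0).fun_add (hG 3)).const_mul 2⁻¹
  have hμb : DifferentiableAt 𝕜 (fun z => μ z * b z) x := by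
    have e : (fun z => μ z * b z) =
        fun z => 2⁻¹ * (μ z * W (a z) (b z) 0 - μ z * W (a z) (b z) 3) :=
      funext fun z => by linear_combination -(2⁻¹ * μ z) * W_zero_sub_W_three (a z) (b z)
    rw [e]
    exact ((hG 0).fun_sub (hG 3)).const_mul 2⁻¹
  exact ⟨hμ', hμa.of_mul_left hμ' hμ, hμb.of_mul_left hμ' hμ⟩

end Weierstrass

theorem stmt_2 (U : Set ℂ) (μ a b : ℂ → ℂ)
    (hμd : ∀ w ∈ U, DifferentiableAt ℝ μ w)
    (had : ∀ w ∈ U, DifferentiableAt ℝ a w)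
    (hbd : ∀ w ∈ U, DifferentiableAt ℝ b w)
    (hμ0 : ∀ w ∈ U, μ w ≠ 0) :
    (∀ w ∈ U, wdbar (fun z => μ z • W (a z) (b z)) w = 0) ↔
      ((∀ w ∈ U, DifferentiableAt ℂ μ w) ∧ (∀ w ∈ U, DifferentiableAt ℂ a w) ∧
        (∀ w ∈ U, DifferentiableAt ℂ b w)) := by
  rw [← forall₂_and, ← forall₂_and]
  refine forall₂_congr fun w hw => ?_
  have hreal : DifferentiableAt ℝ (fun z => μ z • W (a z) (b z)) w :=
    (differentiableAt_smul_W_iff (hμ0 w hw)).2 ⟨hμd w hw, had w hw, hbd w hw⟩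
  rw [← differentiableAt_complex_iff_wdbar_eq_zero hreal, differentiableAt_smul_W_iff (hμ0 w hw)]
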